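/- arXiv:0812.1728 — 2 statements merged into one kernel-verified Lean document; each statement's English description precedes it below -/
import Mathlib

section
/- Antisymmetry of implication up to equivalence: if x → y and y → x, then {x} ~ {y}. -/
structure ConsistencySpace (X : Type*) [Nonempty X] where
  P : Set (Set X)
  univ_not_mem : Set.univ ∉ P
  singleton_mem : ∀ x : X, {x} ∈ P
  downward : ∀ ⦃A B : Set X⦄, A ∈ P → B ⊆ A → B ∈ P

def ConsistencySpace.Equiv {X : Type*} [Nonempty X] (C : ConsistencySpace X)
    (χ γ : Set X) : Prop :=
  ∀ κ : Set X, χ ∪ κ ∈ C.P ↔ γ ∪ κ ∈ C.P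

def ConsistencySpace.IsNegation {X : Type*} [Nonempty X] (C : ConsistencySpace X)
    (x y : X) : Prop :=
  ({x, y} : Set X) ∉ C.P ∧
  (∀ z : Set X, {x} ∪ z ∉ C.P → C.Equiv ({y} ∪ z) z) ∧
  (∀ z : Set X, {y} ∪ z ∉ C.P → C.Equiv ({x} ∪ z) z)

def ConsistencySpace.IsNegationSet {X : Type*} [Nonempty X] (C : ConsistencySpace X)
    (A : Set X) (a : X) : Prop :=
  A ∪ {a} ∉ C.P ∧
  (∀ z : Set X, A ∪ z ∉ C.P → C.Equiv ({a} ∪ z) z) ∧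
  (∀ z : Set X, {a} ∪ z ∉ C.P → C.Equiv (A ∪ z) z)

/-! If `x → y`, then `{ȳ} ∪ {x} ∪ κ` contains the inconsistent set `{x, ȳ}`, so the negation
axiom for `y` says that adjoining `y` to `{x} ∪ κ` does not change its consistency. With
`y → x` as well, `{x} ∪ κ` and `{y} ∪ κ` are therefore both consistent exactly when
`{x, y} ∪ κ` is. -/

namespace ConsistencySpace

variable {X : Type*} [Nonempty X] {C : ConsistencySpace X}

theorem Equiv.mem_iff {A B : Set X} (h : C.Equiv A B) : A ∈ C.P ↔ B ∈ C.P := by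
  simpa only [Set.union_empty] using h ∅

theorem notMem_of_subset {A B : Set X} (hB : B ∉ C.P) (hBA : B ⊆ A) : A ∉ C.P :=
  fun hA => hB (C.downward hA hBA)

theorem union_singleton_mem_iff_of_imp {x y yb : X} (hy : C.IsNegation y yb)
    (hxy : ({x, yb} : Set X) ∉ C.P) (κ : Set X) :
    {y} ∪ ({x} ∪ κ) ∈ C.P ↔ {x} ∪ κ ∈ C.P := by
  have hinc : {yb} ∪ ({x} ∪ κ) ∉ C.P :=
    notMem_of_subset hxy (by
      rw [Set.pair_comm]
      exact Set.insert_subset_insert (Set.singleton_subset_iff.mpr (Or.inl rfl)))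
  exact (hy.2.2 _ hinc).mem_iff

end ConsistencySpace

theorem imp_antisymm {X : Type*} [Nonempty X] (C : ConsistencySpace X)
    (x y xb yb : X) (hx : C.IsNegation x xb) (hy : C.IsNegation y yb)
    (hxy : ({x, yb} : Set X) ∉ C.P) (hyx : ({y, xb} : Set X) ∉ C.P) :
    C.Equiv {x} {y} := by
  intro κ
  calc {x} ∪ κ ∈ C.P ↔ {y} ∪ ({x} ∪ κ) ∈ C.P := (C.union_singleton_mem_iff_of_imp hy hxy κ).symm
    _ ↔ {x} ∪ ({y} ∪ κ) ∈ C.P := by rw [Set.union_left_comm]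
    _ ↔ {y} ∪ κ ∈ C.P := C.union_singleton_mem_iff_of_imp hx hyx κ
end

section
/- Least upper bound property: if x → t and y → t, and u is a negation of the set {x̄, ȳ}, then u → t (i.e., {u, t̄} ∉ P). -/
/-!
If `{u, t̄}` were consistent, then, since `x` and `y` are each inconsistent with `t̄`, adding
first `x̄` and then `ȳ` to it keeps it consistent; the result contains `{x̄, ȳ, u}`, which is
inconsistent because `u` negates `{x̄, ȳ}`.
-/

namespace ConsistencySpace

variable {X : Type*} [Nonempty X] (C : ConsistencySpace X)

theorem not_mem_of_subset {A B : Set X} (hA : A ∉ C.P) (hAB : A ⊆ B) : B ∉ C.P :=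
  fun hB => hA (C.downward hB hAB)

variable {C}

theorem IsNegation.insert_mem {x xb : X} {z : Set X} (h : C.IsNegation x xb) (hz : z ∈ C.P)
    (hxz : insert x z ∉ C.P) : insert xb z ∈ C.P := by
  have := h.2.1 z (by rwa [Set.singleton_union]) ∅
  simpa only [Set.union_empty, Set.singleton_union, hz, iff_true] using this

end ConsistencySpace

theorem lub_property_general {X : Type*} [Nonempty X] (C : ConsistencySpace X)
    (x y xb yb tb u : X)
    (hx : C.IsNegation x xb) (hy : C.IsNegation y yb)
    (hu : C.IsNegationSet ({xb, yb} : Set X) u)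
    (hxt : ({x, tb} : Set X) ∉ C.P) (hyt : ({y, tb} : Set X) ∉ C.P) :
    ({u, tb} : Set X) ∉ C.P := by
  intro h
  have hxb : insert xb {u, tb} ∈ C.P :=
    hx.insert_mem h (C.not_mem_of_subset hxt (Set.insert_subset_insert (Set.subset_insert u _)))
  have hyb : insert yb (insert xb {u, tb}) ∈ C.P :=
    hy.insert_mem hxb (C.not_mem_of_subset hyt (by simp [Set.insert_subset_iff]))
  exact hu.1 (C.downward hyb (by simp [Set.insert_subset_iff]))

theorem lub_property {X : Type*} [Nonempty X] (C : ConsistencySpace X)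
    (x y t xb yb tb u : X)
    (hx : C.IsNegation x xb) (hy : C.IsNegation y yb) (ht : C.IsNegation t tb)
    (hu : C.IsNegationSet ({xb, yb} : Set X) u)
    (hxt : ({x, tb} : Set X) ∉ C.P) (hyt : ({y, tb} : Set X) ∉ C.P) :
    ({u, tb} : Set X) ∉ C.P :=
  lub_property_general C x y xb yb tb u hx hy hu hxt hyt
end
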